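/- arXiv:1311.2241 — 2 statements merged into one kernel-verified Lean document; each statement's English description precedes it below -/
import Mathlib

section
/- Let J be a symmetric positive definite n×n matrix whose sparsity pattern is that of a tree T = (V, E) (i.e., J_{ij} ≠ 0 for i ≠ j only if (i,j) ∈ E, where E is the edge set of a tree on V). Let P = J^{-1}. Then det(J)^{-1} = (∏_{i∈V} P_{ii}) · ∏_{(i,j)∈E} (P_{ii}P_{jj} - P_{ij}^2)/(P_{ii}P_{jj}). -/
/-!
Eliminating a leaf `v` of the tree, with neighbour `u`, by one step of Gaussian elimination
replaces `J` by its Schur complement `S` on the remaining vertices: `det J = J_vv · det S`, the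
inverse of `S` is the principal submatrix of `P = J⁻¹` on those vertices, and `S` is again positive
definite with the sparsity pattern of the pruned tree, since only its entry `(u, u)` differs from
`J`. By induction the formula reduces to `P_vv (1 - ρ_vu²) = 1 / J_vv`, which is row `v` of
`J P = 1`: the only nonzero entries of that row of `J` are `J_vv` and `J_vu`.
-/

open Matrix

namespace Matrix

variable {𝕜 V : Type*}

/-- `1 - ρᵢⱼ²` for the correlation `ρᵢⱼ = Pᵢⱼ / √(Pᵢᵢ Pⱼⱼ)` of a covariance matrix `P`. -/
def oneSubCorrSq [Field 𝕜] (P : Matrix V V 𝕜) : Sym2 V → 𝕜 :=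
  Sym2.lift ⟨fun i j => (P i i * P j j - P i j * P j i) / (P i i * P j j), fun i j => by ring⟩

theorem oneSubCorrSq_submatrix [Field 𝕜] {W : Type*} (P : Matrix V V 𝕜) (f : W → V) (e : Sym2 W) :
    (P.submatrix f f).oneSubCorrSq e = P.oneSubCorrSq (e.map f) := by
  induction e using Sym2.ind with
  | _ i j => rfl

def HasSparsityPattern [Zero 𝕜] (M : Matrix V V 𝕜) (G : SimpleGraph V) : Prop :=
  ∀ i j, i ≠ j → ¬ G.Adj i j → M i j = 0

def schurComplDiag [Field 𝕜] (M : Matrix V V 𝕜) (v : V) : Matrix ({v}ᶜ : Set V) ({v}ᶜ : Set V) 𝕜 :=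
  of fun i j => M i j - M i v * M v j / M v v

theorem HasSparsityPattern.schurComplDiag [Field 𝕜] {M : Matrix V V 𝕜} {G : SimpleGraph V}
    (hM : M.HasSparsityPattern G) {u v : V} (hleaf : ∀ w, G.Adj v w ↔ w = u) :
    (M.schurComplDiag v).HasSparsityPattern (G.induce {v}ᶜ) := by
  intro i j hij hadj
  have hij' : (i : V) ≠ j := Subtype.coe_injective.ne hij
  have hMij : M i j = 0 := hM i j hij' hadj
  have hMivj : M i v * M v j = 0 := by
    by_cases hiu : (i : V) = u
    · refine mul_eq_zero_of_right _ (hM v j (Ne.symm j.2) fun h => hij' ?_)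
      rw [hiu, (hleaf j).mp h]
    · exact mul_eq_zero_of_left (hM i v i.2 fun h => hiu ((hleaf i).mp h.symm)) _
  simp [Matrix.schurComplDiag, hMij, hMivj]

variable [Fintype V] [DecidableEq V]

section Field

variable [Field 𝕜] {M : Matrix V V 𝕜} {v : V}

theorem schurComplDiag_mul_submatrix {P : Matrix V V 𝕜} (hMP : M * P = 1) (hv : M v v ≠ 0) :
    M.schurComplDiag v * P.submatrix Subtype.val Subtype.val = 1 := by
  have hrow (k : V) (j : ({v}ᶜ : Set V)) :
      ∑ l : ({v}ᶜ : Set V), M k l * P l j = (1 : Matrix V V 𝕜) k j - M k v * P v j := by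
    rw [← hMP, mul_apply, eq_sub_iff_add_eq, add_comm]
    exact (Fintype.sum_eq_add_sum_subtype_ne (fun l => M k l * P l j) v).symm
  ext i j
  have hvj : (1 : Matrix V V 𝕜) v j = 0 := one_apply_ne (Ne.symm j.2)
  calc ∑ l : ({v}ᶜ : Set V), (M i l - M i v * M v l / M v v) * P l j
      = ∑ l : ({v}ᶜ : Set V), M i l * P l j
          - M i v / M v v * ∑ l : ({v}ᶜ : Set V), M v l * P l j := by
        rw [Finset.mul_sum, ← Finset.sum_sub_distrib]
        exact Finset.sum_congr rfl fun l _ => by ring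
    _ = (1 : Matrix ({v}ᶜ : Set V) ({v}ᶜ : Set V) 𝕜) i j := by
        rw [hrow, hrow, hvj]
        simp only [one_apply, Subtype.ext_iff]
        split_ifs <;> field_simp <;> ring

theorem inv_schurComplDiag (hM : IsUnit M.det) (hv : M v v ≠ 0) :
    (M.schurComplDiag v)⁻¹ = M⁻¹.submatrix Subtype.val Subtype.val :=
  inv_eq_right_inv (schurComplDiag_mul_submatrix (mul_nonsing_inv M hM) hv)

theorem det_eq_mul_det_schurComplDiag (hv : M v v ≠ 0) :
    M.det = M v v * (M.schurComplDiag v).det := by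
  let e := Equiv.Set.sumCompl ({v} : Set V)
  let A : Matrix ({v} : Set V) ({v} : Set V) 𝕜 := of fun _ _ => M v v
  let B : Matrix ({v} : Set V) ({v}ᶜ : Set V) 𝕜 := of fun _ j => M v j
  let C : Matrix ({v}ᶜ : Set V) ({v} : Set V) 𝕜 := of fun i _ => M i v
  have hA : A.det = M v v := det_unique A
  have : Invertible A := invertibleOfIsUnitDet A (hA ▸ hv.isUnit)
  have hblocks : M.submatrix e e = fromBlocks A B C (M.submatrix Subtype.val Subtype.val) := by
    ext (⟨_, rfl⟩ | i) (⟨_, rfl⟩ | j) <;> simp [e, A, B, C]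
  have hschur : M.submatrix Subtype.val Subtype.val - C * ⅟A * B = M.schurComplDiag v := by
    ext i j
    simp [invOf_eq_nonsing_inv, mul_apply, A, B, C, schurComplDiag, div_eq_mul_inv]
    ring
  rw [← det_submatrix_equiv_self e, hblocks, det_fromBlocks₁₁, hschur, hA]

end Field

open scoped ComplexOrder in
theorem PosDef.schurComplDiag [RCLike 𝕜] {M : Matrix V V 𝕜} (hM : M.PosDef) (v : V) :
    (M.schurComplDiag v).PosDef := by
  have hv : M v v ≠ 0 := hM.diag_pos.ne'
  have hdet : IsUnit (M.schurComplDiag v).det :=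
    (right_ne_zero_of_mul ((det_eq_mul_det_schurComplDiag hv).symm.trans_ne hM.det_pos.ne')).isUnit
  rw [← nonsing_inv_nonsing_inv _ hdet, inv_schurComplDiag hM.det_pos.ne'.isUnit hv]
  exact (hM.inv.submatrix Subtype.val_injective).inv

theorem mul_oneSubCorrSq_of_leaf [Field 𝕜] {M P : Matrix V V 𝕜} (hMP : M * P = 1) {u v : V}
    (huv : u ≠ v) (hrow : ∀ w, w ≠ v → w ≠ u → M v w = 0) (hu : P u u ≠ 0) (hv : P v v ≠ 0) :
    P v v * P.oneSubCorrSq s(v, u) = (M v v)⁻¹ := by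
  have hentry (j : V) : M v v * P v j + M v u * P u j = (1 : Matrix V V 𝕜) v j := by
    rw [← hMP, mul_apply, Fintype.sum_eq_add v u huv.symm fun w hw => by
      rw [hrow w hw.1 hw.2, zero_mul]]
  have hvv := hentry v
  have hvu := hentry u
  rw [one_apply_eq] at hvv
  rw [one_apply_ne huv.symm] at hvu
  refine eq_inv_of_mul_eq_one_left ?_
  simp only [oneSubCorrSq, Sym2.lift_mk]
  field_simp
  linear_combination P u u * hvv - P u v * hvu

end Matrix

namespace SimpleGraph

variable {V : Type*} [Fintype V] [DecidableEq V] {G : SimpleGraph V} [DecidableRel G.Adj]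

theorem prod_edgeFinset_eq_mul_prod_induce_compl {M : Type*} [CommMonoid M] {u v : V}
    (hleaf : ∀ w, G.Adj v w ↔ w = u) (f : Sym2 V → M) :
    ∏ e ∈ G.edgeFinset, f e =
      f s(v, u) * ∏ e ∈ (G.induce {v}ᶜ).edgeFinset, f (e.map Subtype.val) := by
  have hinc : {e ∈ G.edgeFinset | v ∈ e} = {s(v, u)} := by
    ext e
    induction e using Sym2.ind with
    | _ x y =>
      simp only [Finset.mem_filter, mem_edgeFinset, mem_edgeSet, Sym2.mem_iff,
        Finset.mem_singleton, Sym2.eq_iff]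
      grind [hleaf x, hleaf y, G.adj_comm]
  have hrest : {e ∈ G.edgeFinset | v ∉ e} =
      (G.induce {v}ᶜ).edgeFinset.map (Function.Embedding.subtype _).sym2Map := by
    rw [map_edgeFinset_induce]
    ext e
    simp only [Finset.mem_filter, Finset.mem_inter, Finset.mem_sym2_iff, Set.mem_toFinset,
      Set.mem_compl_singleton_iff]
    exact and_congr_right fun _ => ⟨fun h a ha hav => h (hav ▸ ha), fun h hv => h v hv rfl⟩
  rw [← Finset.prod_filter_mul_prod_filter_not G.edgeFinset (v ∈ ·), hinc, hrest,
    Finset.prod_singleton, Finset.prod_map]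
  rfl

end SimpleGraph

open SimpleGraph in
theorem Matrix.PosDef.inv_det_eq_prod_oneSubCorrSq_of_isTree {V : Type*} [Fintype V] [DecidableEq V]
    {G : SimpleGraph V} [DecidableRel G.Adj] (hG : G.IsTree) {J : Matrix V V ℝ} (hJ : J.PosDef)
    (hsparse : J.HasSparsityPattern G) :
    (J.det)⁻¹ = (∏ i, J⁻¹ i i) * ∏ e ∈ G.edgeFinset, J⁻¹.oneSubCorrSq e := by
  induction hcard : Fintype.card V using Nat.strong_induction_on generalizing V with
  | _ N IH =>
  rcases subsingleton_or_nontrivial V with hV | hV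
  · have : Nonempty V := hG.connected.nonempty
    have : Unique V := uniqueOfSubsingleton (Classical.arbitrary V)
    have hE : G.edgeFinset = ∅ := by
      ext e
      induction e using Sym2.ind with
      | _ x y => simp [Subsingleton.elim x y]
    simp [hE, det_unique, Ring.inverse_eq_inv]
  · obtain ⟨v, hdeg⟩ := hG.exists_vert_degree_one_of_nontrivial
    obtain ⟨u, hvu, hu⟩ := degree_eq_one_iff_existsUnique_adj.mp hdeg
    have hleaf (w : V) : G.Adj v w ↔ w = u := ⟨hu w, fun h => h ▸ hvu⟩
    have hJvv : J v v ≠ 0 := hJ.diag_pos.ne'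
    have hT : (G.induce {v}ᶜ).IsTree :=
      ⟨hG.connected.induce_compl_singleton_of_degree_eq_one hdeg, hG.isAcyclic.induce _⟩
    have hcard_lt : Fintype.card ({v}ᶜ : Set V) < N :=
      hcard ▸ Fintype.card_subtype_lt (p := (· ∈ ({v}ᶜ : Set V))) (x := v) (by simp)
    have hS := IH _ hcard_lt hT (hJ.schurComplDiag v) (hsparse.schurComplDiag hleaf) rfl
    rw [inv_schurComplDiag hJ.det_pos.ne'.isUnit hJvv] at hS
    have hvertex : ∏ i, J⁻¹ i i = J⁻¹ v v * ∏ i : ({v}ᶜ : Set V), J⁻¹ i i :=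
      Fintype.prod_eq_mul_prod_subtype_ne _ v
    have hroot : J⁻¹ v v * J⁻¹.oneSubCorrSq s(v, u) = (J v v)⁻¹ :=
      mul_oneSubCorrSq_of_leaf (mul_nonsing_inv J hJ.det_pos.ne'.isUnit) hvu.ne'
        (fun w hwv hwu => hsparse v w (Ne.symm hwv) ((hleaf w).not.mpr hwu))
        hJ.inv.diag_pos.ne' hJ.inv.diag_pos.ne'
    simp only [oneSubCorrSq_submatrix, submatrix_apply] at hS
    rw [det_eq_mul_det_schurComplDiag hJvv, mul_inv, hS, hvertex,
      prod_edgeFinset_eq_mul_prod_induce_compl hleaf, ← hroot]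
    ring

theorem tree_det_factorization {n : ℕ} (G : SimpleGraph (Fin n)) [DecidableRel G.Adj]
    (hG : G.IsTree) (J : Matrix (Fin n) (Fin n) ℝ) (hJ : J.PosDef)
    (hsparse : ∀ i j, i ≠ j → ¬ G.Adj i j → J i j = 0) :
    (J.det)⁻¹ =
      (∏ i, J⁻¹ i i) *
        ∏ e ∈ G.edgeFinset,
          Sym2.lift
            ⟨fun i j => (J⁻¹ i i * J⁻¹ j j - J⁻¹ i j * J⁻¹ j i) / (J⁻¹ i i * J⁻¹ j j),
             fun i j => by ring_nf⟩ e :=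
  hJ.inv_det_eq_prod_oneSubCorrSq_of_isTree hG hsparse
end

section
/- Let Σ be a symmetric positive definite n×n matrix such that J = Σ^{-1} is sparse with respect to a tree T = (V, E). Then for every edge (i,j) ∈ E, J_{ij} = Σ_{ij} / (Σ_{ij}^2 - Σ_{ii}Σ_{jj}), and for every vertex i, J_{ii} = (1 - deg(i)) Σ_{ii}^{-1} + ∑_{j ∈ N(i)} (Σ_{ii} - Σ_{ij} Σ_{jj}^{-1} Σ_{ji})^{-1}. -/
/-!
For an edge `ij`, the Schur complement formula expresses the inverse of the `{i, j}` block of `S`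
through `J = S⁻¹` and the remaining block `J_ss`, `s = V ∖ {i, j}`. Since `J_ss` is sparse with
respect to `T - {i, j}`, its inverse vanishes between different components of `T - {i, j}`; as no
component contains both a neighbour of `i` and a neighbour of `j`, the correction term
`J_is J_ss⁻¹ J_sj` is zero, and inverting the `2 × 2` block gives `J_ij`. The diagonal entry then
follows from row `i` of `J S = 1`, which only involves `i` and its neighbours.
-/

open Matrix

theorem SimpleGraph.IsAcyclic.not_reachable_induce_of_adj {V : Type*} {G : SimpleGraph V}
    (hG : G.IsAcyclic) {i j : V} (hij : G.Adj i j) {s : Set V} (hi : i ∉ s) (hj : j ∉ s)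
    {c d : s} (hic : G.Adj i c) (hjd : G.Adj j d) : ¬(G.induce s).Reachable c d := by
  rintro ⟨p⟩
  obtain ⟨q, hq⟩ : ∃ q : G.Walk c d, ∀ x ∈ q.support, x ∈ s :=
    ⟨p.map (Embedding.induce s).toHom, fun x hx => by
      obtain ⟨y, -, rfl⟩ := List.mem_map.mp ((Walk.support_map _ p).symm ▸ hx)
      exact y.2⟩
  -- In an acyclic graph every walk from `i` to `j` uses the edge `ij`; the walk `i, c, …, d, j`
  -- can only use it inside `q`.
  have hmem := isBridge_iff_forall_walk_mem_edges.mp (isAcyclic_iff_forall_adj_isBridge.mp hG hij)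
    (.cons hic (q.append (.cons hjd.symm .nil)))
  have hcj : (c : V) ≠ j := fun h => hj (h ▸ c.2)
  have hdi : (d : V) ≠ i := fun h => hi (h ▸ d.2)
  have hq_edge : s(i, j) ∈ q.edges := by
    simpa [Walk.edges_append, hcj.symm, hdi.symm, hic.ne, hij.ne] using hmem
  exact hi (hq i (q.fst_mem_support_of_mem_edges hq_edge))

namespace Matrix

def IsSparseFor {ι α : Type*} [Zero α] (M : Matrix ι ι α) (G : SimpleGraph ι) : Prop :=
  ∀ i j, i ≠ j → ¬G.Adj i j → M i j = 0

theorem IsSparseFor.submatrix_val {ι α : Type*} [Zero α] {G : SimpleGraph ι} {M : Matrix ι ι α}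
    (hM : M.IsSparseFor G) (s : Set ι) :
    (M.submatrix ((↑) : s → ι) (↑)).IsSparseFor (G.induce s) :=
  fun _ _ hxy hadj => hM _ _ (Subtype.coe_injective.ne hxy) (by simpa using hadj)

theorem IsSparseFor.mul_apply {ι α : Type*} [Fintype ι] [NonUnitalNonAssocSemiring α]
    {G : SimpleGraph ι} [DecidableRel G.Adj] {M : Matrix ι ι α} (hM : M.IsSparseFor G)
    (N : Matrix ι ι α) (i l : ι) :
    (M * N) i l = M i i * N i l + ∑ k ∈ G.neighborFinset i, M i k * N k l := by
  classical
  rw [Matrix.mul_apply,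
    ← Finset.sum_insert (f := fun k => M i k * N k l) (G.notMem_neighborFinset_self i)]
  refine (Finset.sum_subset (Finset.subset_univ _) fun k _ hk => ?_).symm
  simp only [Finset.mem_insert, SimpleGraph.mem_neighborFinset, not_or] at hk
  rw [hM i k (Ne.symm hk.1) hk.2, zero_mul]

theorem inv_fin_two_apply_zero_one {α : Type*} [Field α] (A : Matrix (Fin 2) (Fin 2) α) :
    A⁻¹ 0 1 = -A 0 1 / A.det := by
  simp [inv_def, adjugate_fin_two, div_eq_inv_mul]

section CommRing

variable {ι α : Type*} [Fintype ι] [DecidableEq ι] [CommRing α]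

theorem commute_nonsing_inv_left {A B : Matrix ι ι α} (h : Commute A B) : Commute A⁻¹ B := by
  by_cases hA : IsUnit A.det
  · calc A⁻¹ * B = A⁻¹ * (B * A) * A⁻¹ := by
          rw [Matrix.mul_assoc, mul_nonsing_inv_cancel_right _ _ hA]
      _ = A⁻¹ * (A * B) * A⁻¹ := by rw [h.eq]
      _ = B * A⁻¹ := by rw [nonsing_inv_mul_cancel_left _ _ hA]
  · simp [nonsing_inv_apply_not_isUnit _ hA]

theorem IsSparseFor.inv_apply_eq_zero_of_not_reachable {G : SimpleGraph ι} {M : Matrix ι ι α}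
    (hM : M.IsSparseFor G) {a b : ι} (hab : ¬G.Reachable a b) : M⁻¹ a b = 0 := by
  classical
  -- `M` commutes with the projection onto the connected component of `a`, hence so does `M⁻¹`.
  let P : Matrix ι ι α := diagonal fun x => if G.Reachable a x then 1 else 0
  have hMP : Commute M P := by
    ext x y
    simp only [P, mul_diagonal, diagonal_mul]
    by_cases hxy : G.Reachable a x ↔ G.Reachable a y
    · simp only [hxy, mul_comm]
    · have hne : x ≠ y := by rintro rfl; exact hxy Iff.rfl
      have hnadj : ¬G.Adj x y := fun h =>
        hxy ⟨fun hx => hx.trans h.reachable, fun hy => hy.trans h.symm.reachable⟩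
      simp [hM x y hne hnadj]
  simpa [P, mul_diagonal, diagonal_mul, hab] using
    (congrFun (congrFun (commute_nonsing_inv_left hMP).eq a) b).symm

theorem inv_submatrix_inv_inl {m n : Type*} [Fintype m] [DecidableEq m] [Fintype n]
    [DecidableEq n] (M : Matrix ι ι α) (e : m ⊕ n ≃ ι) (hM : IsUnit M.det)
    (hD : IsUnit (M.submatrix (e ∘ Sum.inr) (e ∘ Sum.inr)).det) :
    ((M⁻¹).submatrix (e ∘ Sum.inl) (e ∘ Sum.inl))⁻¹ =
      M.submatrix (e ∘ Sum.inl) (e ∘ Sum.inl) -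
        M.submatrix (e ∘ Sum.inl) (e ∘ Sum.inr) * (M.submatrix (e ∘ Sum.inr) (e ∘ Sum.inr))⁻¹ *
          M.submatrix (e ∘ Sum.inr) (e ∘ Sum.inl) := by
  set r := e ∘ Sum.inl
  set c := e ∘ Sum.inr
  have h1 : M⁻¹.submatrix r r * M.submatrix r r + M⁻¹.submatrix r c * M.submatrix c r = 1 := by
    ext a b
    simpa [r, c, Matrix.mul_apply, ← e.sum_comp, Fintype.sum_sum_type, one_apply] using
      congrFun (congrFun (congrArg (·.submatrix r r) (nonsing_inv_mul M hM)) a) b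
  have h2 : M⁻¹.submatrix r r * M.submatrix r c + M⁻¹.submatrix r c * M.submatrix c c = 0 := by
    ext a b
    simpa [r, c, Matrix.mul_apply, ← e.sum_comp, Fintype.sum_sum_type, one_apply] using
      congrFun (congrFun (congrArg (·.submatrix r c) (nonsing_inv_mul M hM)) a) b
  refine inv_eq_right_inv ?_
  calc M⁻¹.submatrix r r *
        (M.submatrix r r - M.submatrix r c * (M.submatrix c c)⁻¹ * M.submatrix c r)
      = M⁻¹.submatrix r r * M.submatrix r r
          - M⁻¹.submatrix r r * M.submatrix r c * (M.submatrix c c)⁻¹ * M.submatrix c r := by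
        simp only [Matrix.mul_sub, Matrix.mul_assoc]
    _ = M⁻¹.submatrix r r * M.submatrix r r
          + M⁻¹.submatrix r c * M.submatrix c c * (M.submatrix c c)⁻¹ * M.submatrix c r := by
        rw [eq_neg_of_add_eq_zero_left h2, Matrix.neg_mul, Matrix.neg_mul, sub_neg_eq_add]
    _ = 1 := by rw [mul_nonsing_inv_cancel_right _ _ hD, h1]

end CommRing

section Real

variable {V : Type*} {G : SimpleGraph V} {S : Matrix V V ℝ}

theorem PosDef.apply_mul_apply_lt (hS : S.PosDef) {i j : V} (hij : i ≠ j) :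
    S i j * S j i < S i i * S j j := by
  have := (hS.submatrix (injective_pair_iff_ne.mpr hij)).det_pos
  rw [det_fin_two] at this
  simpa [sub_pos] using this

variable [Fintype V] [DecidableEq V]

theorem PosDef.inv_apply_of_adj (hS : S.PosDef) (hG : G.IsAcyclic) (hsparse : S⁻¹.IsSparseFor G)
    {i j : V} (hij : G.Adj i j) : S⁻¹ i j = S i j / (S i j ^ 2 - S i i * S j j) := by
  classical
  have hJ : S⁻¹.PosDef := hS.inv
  let f : Fin 2 → V := ![i, j]
  let s : Set V := (Set.range f)ᶜ
  let e : Fin 2 ⊕ s ≃ V :=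
    ((Equiv.ofInjective f (injective_pair_iff_ne.mpr hij.ne)).sumCongr (Equiv.refl _)).trans
      (Equiv.Set.sumCompl _)
  have hschur := inv_submatrix_inv_inl S⁻¹ e hJ.det_pos.ne'.isUnit
    (hJ.submatrix (e.injective.comp Sum.inr_injective)).det_pos.ne'.isUnit
  have hel : e ∘ Sum.inl = f := funext fun _ => Equiv.Set.sumCompl_apply_inl _ _
  have her : e ∘ Sum.inr = ((↑) : s → V) := funext fun _ => Equiv.Set.sumCompl_apply_inr _ _
  rw [hel, her, nonsing_inv_nonsing_inv S hS.det_pos.ne'.isUnit] at hschur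
  have hi : i ∉ s := fun h => h ⟨0, rfl⟩
  have hj : j ∉ s := fun h => h ⟨1, rfl⟩
  have hcorr : (S⁻¹.submatrix f ((↑) : s → V) * (S⁻¹.submatrix ((↑) : s → V) ((↑) : s → V))⁻¹ *
      S⁻¹.submatrix ((↑) : s → V) f) 0 1 = 0 := by
    simp only [mul_apply, Finset.sum_mul, submatrix_apply]
    refine Finset.sum_eq_zero fun d _ => Finset.sum_eq_zero fun c _ => ?_
    change S⁻¹ i c * _ * S⁻¹ d j = 0
    by_cases hic : G.Adj i c
    · by_cases hjd : G.Adj j d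
      · rw [(hsparse.submatrix_val s).inv_apply_eq_zero_of_not_reachable
          (hG.not_reachable_induce_of_adj hij hi hj hic hjd), mul_zero, zero_mul]
      · rw [hsparse d j (fun h => hj (h ▸ d.2)) (fun h => hjd h.symm), mul_zero]
    · rw [hsparse i c (fun h => hi (h ▸ c.2)) hic, zero_mul, zero_mul]
  have hentry := congrFun (congrFun hschur 0) 1
  rw [sub_apply, hcorr, sub_zero, inv_fin_two_apply_zero_one, det_fin_two] at hentry
  change -S i j / (S i i * S j j - S i j * S j i) = S⁻¹ i j at hentry
  have hsymm : S j i = S i j := by simpa using hS.isHermitian.apply i j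
  rw [← hentry, hsymm, neg_div, ← div_neg, neg_sub, sq]

theorem PosDef.inv_apply_self_of_inv_apply_adj [DecidableRel G.Adj] (hS : S.PosDef)
    (hsparse : S⁻¹.IsSparseFor G) (i : V)
    (hadj : ∀ j, G.Adj i j → S⁻¹ i j = S i j / (S i j ^ 2 - S i i * S j j)) :
    S⁻¹ i i = (1 - (G.degree i : ℝ)) * (S i i)⁻¹ +
      ∑ j ∈ G.neighborFinset i, (S i i - S i j * (S j j)⁻¹ * S j i)⁻¹ := by
  have hrow := hsparse.mul_apply S i i
  rw [nonsing_inv_mul S hS.det_pos.ne'.isUnit, one_apply_eq] at hrow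
  have hterm : ∀ j ∈ G.neighborFinset i,
      S⁻¹ i j * S j i = 1 - S i i * (S i i - S i j * (S j j)⁻¹ * S j i)⁻¹ := by
    intro j hj
    rw [SimpleGraph.mem_neighborFinset] at hj
    have hsymm : S j i = S i j := by simpa using hS.isHermitian.apply i j
    have hjj : S j j ≠ 0 := hS.diag_pos.ne'
    have hlt : S i j ^ 2 < S i i * S j j := by
      simpa [hsymm, sq] using hS.apply_mul_apply_lt hj.ne
    have hdet : S i i * S j j - S i j ^ 2 ≠ 0 := (sub_pos.mpr hlt).ne'
    have hdet' : S i j ^ 2 - S i i * S j j ≠ 0 := (sub_neg.mpr hlt).ne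
    rw [hadj j hj, hsymm]
    field_simp
    ring
  rw [Finset.sum_congr rfl hterm, Finset.sum_sub_distrib, ← Finset.mul_sum, Finset.sum_const,
    SimpleGraph.card_neighborFinset_eq_degree, nsmul_eq_mul, mul_one] at hrow
  have hii : S i i ≠ 0 := hS.diag_pos.ne'
  generalize ∑ j ∈ G.neighborFinset i, (S i i - S i j * (S j j)⁻¹ * S j i)⁻¹ = u at hrow ⊢
  field_simp
  linarith

end Real

end Matrix

theorem tree_inverse_entries {n : ℕ} (G : SimpleGraph (Fin n)) [DecidableRel G.Adj]
    (hG : G.IsTree) (S : Matrix (Fin n) (Fin n) ℝ) (hS : S.PosDef)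
    (hsparse : ∀ i j, i ≠ j → ¬ G.Adj i j → S⁻¹ i j = 0) :
    (∀ i j, G.Adj i j → S⁻¹ i j = S i j / ((S i j) ^ 2 - S i i * S j j)) ∧
    (∀ i, S⁻¹ i i = (1 - (G.degree i : ℝ)) * (S i i)⁻¹ +
        ∑ j ∈ G.neighborFinset i, (S i i - S i j * (S j j)⁻¹ * S j i)⁻¹) := by
  have hedge i j (hij : G.Adj i j) := hS.inv_apply_of_adj hG.isAcyclic hsparse hij
  exact ⟨hedge, fun i => hS.inv_apply_self_of_inv_apply_adj hsparse i (hedge i)⟩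
end
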